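/- arXiv:2104.13063 — 3 statements merged into one kernel-verified Lean document; each statement's English description precedes it below -/
import Mathlib

section
/- Let d ≥ 1 be an integer and let γ_d be the standard Gaussian measure on ℝ^d. Then γ_d({x ∈ ℝ^d : ‖x‖ ≥ r}) ∼ (2π)^{−d/2} · (d·ω_d) · e^{−r²/2} r^{d−2} as r → ∞, i.e. lim_{r→∞} (2π)^{d/2} (d·ω_d)^{−1} e^{r²/2} r^{2−d} γ_d({x : ‖x‖ ≥ r}) = 1. -/
/-!
In polar coordinates, `γ_d {‖x‖ ≥ r} = (2π)^{-d/2} · d ω_d · ∫_r^∞ t^{d-1} e^{-t²/2} dt`.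
For `s > -1` the tail `∫_r^∞ t^s e^{-t²/2} dt` is asymptotic to `e^{-r²/2} r^{s-1}` by
L'Hôpital's rule: both tend to `0`, and the derivative of the latter is
`-r^s e^{-r²/2} (1 - (s-1)/r²)`.
-/

open MeasureTheory Filter

noncomputable def stdGaussian (d : ℕ) : Measure (EuclideanSpace ℝ (Fin d)) :=
  volume.withDensity fun x =>
    ENNReal.ofReal ((2 * Real.pi) ^ (-(d : ℝ) / 2) * Real.exp (-‖x‖ ^ 2 / 2))

open Set Real Topology Metric

section TailIntegral

variable {E : Type*} [NormedAddCommGroup E] [NormedSpace ℝ E]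
  {f : ℝ → E} {a : ℝ}

theorem integral_Ioi_eq_sub_intervalIntegral (hf : IntegrableOn f (Ioi a)) {r : ℝ}
    (hr : a ≤ r) :
    ∫ t in Ioi r, f t = (∫ t in Ioi a, f t) - ∫ t in a..r, f t := by
  rw [intervalIntegral.integral_of_le hr, ← Ioc_union_Ioi_eq_Ioi hr,
    setIntegral_union (Ioc_disjoint_Ioi le_rfl) measurableSet_Ioi
      (hf.mono_set Ioc_subset_Ioi_self) (hf.mono_set (Ioi_subset_Ioi hr))]
  abel

theorem tendsto_integral_Ioi_atTop_nhds_zero (hf : IntegrableOn f (Ioi a)) :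
    Tendsto (fun r => ∫ t in Ioi r, f t) atTop (𝓝 0) := by
  have := tendsto_setIntegral_of_antitone (μ := volume) (f := f) (s := fun r : ℝ => Ioi r)
    (fun _ => measurableSet_Ioi) (fun _ _ h => Ioi_subset_Ioi h) ⟨a, hf⟩
  have hempty : ⋂ r : ℝ, Ioi r = ∅ := iInter_eq_empty_iff.2 fun r => ⟨r, lt_irrefl r⟩
  rwa [hempty, Measure.restrict_empty, integral_zero_measure] at this

theorem hasDerivAt_integral_Ioi [CompleteSpace E] (hf : IntegrableOn f (Ioi a))
    (hcont : ContinuousOn f (Ioi a)) {r : ℝ} (hr : a < r) :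
    HasDerivAt (fun x => ∫ t in Ioi x, f t) (-f r) r := by
  have hint : IntervalIntegrable f volume a r :=
    (intervalIntegrable_iff_integrableOn_Ioc_of_le hr.le).2 (hf.mono_set Ioc_subset_Ioi_self)
  have hderiv : HasDerivAt (fun x => ∫ t in a..x, f t) (f r) r :=
    intervalIntegral.integral_hasDerivAt_right hint
      (hcont.stronglyMeasurableAtFilter isOpen_Ioi r hr) (hcont.continuousAt (Ioi_mem_nhds hr))
  refine (hderiv.const_sub (∫ t in Ioi a, f t)).congr_of_eventuallyEq ?_
  filter_upwards [Ioi_mem_nhds hr] with x hx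
  exact integral_Ioi_eq_sub_intervalIntegral hf (le_of_lt hx)

end TailIntegral

section GaussianMomentTail

variable {s : ℝ}

theorem integrableOn_rpow_mul_exp_neg_sq_div_two (hs : -1 < s) :
    IntegrableOn (fun t : ℝ => t ^ s * exp (-t ^ 2 / 2)) (Ioi 0) := by
  convert integrableOn_rpow_mul_exp_neg_mul_sq one_half_pos hs using 4
  ring

theorem continuousOn_rpow_mul_exp_neg_sq_div_two :
    ContinuousOn (fun t : ℝ => t ^ s * exp (-t ^ 2 / 2)) (Ioi 0) :=
  fun t ht => ((continuousAt_rpow_const t s (Or.inl (ne_of_gt ht))).mul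
    (by fun_prop)).continuousWithinAt

theorem hasDerivAt_exp_neg_sq_div_two_mul_rpow {r : ℝ} (hr : 0 < r) :
    HasDerivAt (fun t : ℝ => exp (-t ^ 2 / 2) * t ^ (s - 1))
      (-(r ^ s * exp (-r ^ 2 / 2)) * (1 - (s - 1) / r ^ 2)) r := by
  have hexp : HasDerivAt (fun t : ℝ => exp (-t ^ 2 / 2)) (exp (-r ^ 2 / 2) * -r) r := by
    have hquad : HasDerivAt (fun t : ℝ => -t ^ 2 / 2) (-r) r :=
      (((hasDerivAt_pow 2 r).neg).div_const 2).congr_deriv (by push_cast; ring)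
    exact hquad.exp
  refine (hexp.mul (hasDerivAt_rpow_const (p := s - 1) (Or.inl hr.ne'))).congr_deriv ?_
  have h1 : r ^ (s - 1) = r ^ s / r := by
    rw [rpow_sub_one hr.ne']
  have h2 : r ^ (s - 1 - 1) = r ^ s / r ^ 2 := by
    rw [sub_sub, ← rpow_natCast, ← rpow_sub hr]
    norm_num
  rw [h1, h2]
  field_simp
  ring

theorem tendsto_exp_neg_sq_div_two_mul_rpow_atTop :
    Tendsto (fun r : ℝ => exp (-r ^ 2 / 2) * r ^ (s - 1)) atTop (𝓝 0) := by
  refine squeeze_zero' ?_ ?_ (tendsto_rpow_mul_exp_neg_mul_atTop_nhds_zero (s - 1) 1 one_pos)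
  · filter_upwards [eventually_ge_atTop 0] with r hr
    positivity
  · filter_upwards [eventually_ge_atTop 2] with r hr
    rw [mul_comm]
    gcongr
    nlinarith

theorem tendsto_integral_Ioi_rpow_mul_exp_neg_sq_div_two_div_atTop (hs : -1 < s) :
    Tendsto (fun r => (∫ t in Ioi r, t ^ s * exp (-t ^ 2 / 2)) /
      (exp (-r ^ 2 / 2) * r ^ (s - 1))) atTop (𝓝 1) := by
  have hquot : Tendsto (fun r : ℝ => (s - 1) / r ^ 2) atTop (𝓝 0) :=
    tendsto_const_nhds.div_atTop (tendsto_pow_atTop two_ne_zero)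
  have hcorr : Tendsto (fun r : ℝ => 1 - (s - 1) / r ^ 2) atTop (𝓝 1) := by
    simpa using tendsto_const_nhds.sub hquot
  have hpos : ∀ᶠ r : ℝ in atTop, 0 < r ^ s * exp (-r ^ 2 / 2) ∧ 0 < 1 - (s - 1) / r ^ 2 := by
    filter_upwards [eventually_gt_atTop 0, hcorr.eventually (lt_mem_nhds one_pos)] with r hr hc
    exact ⟨by positivity, hc⟩
  refine HasDerivAt.lhopital_zero_atTop (f' := fun r => -(r ^ s * exp (-r ^ 2 / 2)))
    (g' := fun r => -(r ^ s * exp (-r ^ 2 / 2)) * (1 - (s - 1) / r ^ 2)) ?_ ?_ ?_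
    (tendsto_integral_Ioi_atTop_nhds_zero (integrableOn_rpow_mul_exp_neg_sq_div_two hs))
    tendsto_exp_neg_sq_div_two_mul_rpow_atTop ?_
  · filter_upwards [eventually_gt_atTop 0] with r hr
    exact hasDerivAt_integral_Ioi (integrableOn_rpow_mul_exp_neg_sq_div_two hs)
      continuousOn_rpow_mul_exp_neg_sq_div_two hr
  · filter_upwards [eventually_gt_atTop 0] with r hr
    exact hasDerivAt_exp_neg_sq_div_two_mul_rpow hr
  · filter_upwards [hpos] with r ⟨h1, h2⟩
    exact mul_ne_zero (neg_ne_zero.2 h1.ne') h2.ne'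
  · have hinv : Tendsto (fun r : ℝ => (1 - (s - 1) / r ^ 2)⁻¹) atTop (𝓝 1) := by
      simpa using hcorr.inv₀ one_ne_zero
    refine hinv.congr' ?_
    filter_upwards [hpos] with r ⟨h1, h2⟩
    rw [div_mul_cancel_left₀ (neg_ne_zero.2 h1.ne')]

end GaussianMomentTail

section Polar

variable {E F : Type*} [NormedAddCommGroup E] [NormedSpace ℝ E] [FiniteDimensional ℝ E]
  [MeasurableSpace E] [BorelSpace E] [Nontrivial E] [NormedAddCommGroup F] [NormedSpace ℝ F]
  (μ : Measure E) [μ.IsAddHaarMeasure]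

theorem setIntegral_le_norm_fun_norm_addHaar (f : ℝ → F) {r : ℝ} (hr : 0 < r) :
    ∫ x in {x : E | r ≤ ‖x‖}, f ‖x‖ ∂μ = Module.finrank ℝ E • μ.real (ball 0 1) •
      ∫ y in Ioi r, y ^ (Module.finrank ℝ E - 1) • f y := by
  have hind : ∀ x : E,
      {x : E | r ≤ ‖x‖}.indicator (fun x => f ‖x‖) x = (Ici r).indicator f ‖x‖ :=
    fun x => by by_cases hx : r ≤ ‖x‖ <;> simp [indicator, hx]
  have hpow : ∀ y : ℝ, y ^ (Module.finrank ℝ E - 1) • (Ici r).indicator f y =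
      (Ici r).indicator (fun y => y ^ (Module.finrank ℝ E - 1) • f y) y :=
    fun y => by by_cases hy : r ≤ y <;> simp [indicator, hy]
  rw [← integral_indicator (measurableSet_le measurable_const measurable_norm)]
  simp_rw [hind, integral_fun_norm_addHaar μ, hpow]
  rw [setIntegral_indicator measurableSet_Ici, inter_eq_self_of_subset_right
    (Ici_subset_Ioi.2 hr), integral_Ici_eq_integral_Ioi]

end Polar

theorem stdGaussian_toReal_apply (d : ℕ) {s : Set (EuclideanSpace ℝ (Fin d))}
    (hs : MeasurableSet s) :
    (stdGaussian d s).toReal = ∫ x in s, (2 * π) ^ (-(d : ℝ) / 2) * exp (-‖x‖ ^ 2 / 2) := by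
  rw [stdGaussian, withDensity_apply _ hs, integral_eq_lintegral_of_nonneg_ae
    (Eventually.of_forall fun x => by positivity) (by fun_prop)]

theorem stdGaussian_toReal_setOf_le_norm {d : ℕ} (hd : 1 ≤ d) {r : ℝ} (hr : 0 < r) :
    (stdGaussian d {x | r ≤ ‖x‖}).toReal = (2 * π) ^ (-(d : ℝ) / 2) *
      ((d : ℝ) * (volume (closedBall (0 : EuclideanSpace ℝ (Fin d)) 1)).toReal) *
      ∫ t in Ioi r, t ^ ((d : ℝ) - 1) * exp (-t ^ 2 / 2) := by
  have : Nontrivial (EuclideanSpace ℝ (Fin d)) :=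
    Module.nontrivial_of_finrank_pos (R := ℝ) (by rw [finrank_euclideanSpace_fin]; omega)
  have hradial :
      ∫ t in Ioi r, t ^ (d - 1) • ((2 * π) ^ (-(d : ℝ) / 2) * exp (-t ^ 2 / 2)) =
      (2 * π) ^ (-(d : ℝ) / 2) * ∫ t in Ioi r, t ^ ((d : ℝ) - 1) * exp (-t ^ 2 / 2) := by
    rw [← integral_const_mul]
    refine setIntegral_congr_fun measurableSet_Ioi fun t _ => ?_
    rw [smul_eq_mul, ← rpow_natCast, Nat.cast_sub hd, Nat.cast_one]
    ring
  rw [stdGaussian_toReal_apply d (measurableSet_le measurable_const measurable_norm),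
    setIntegral_le_norm_fun_norm_addHaar volume
      (fun t => (2 * π) ^ (-(d : ℝ) / 2) * exp (-t ^ 2 / 2)) hr,
    finrank_euclideanSpace_fin, hradial, ← Measure.addHaar_real_closedBall_eq_addHaar_real_ball,
    nsmul_eq_mul, smul_eq_mul, Measure.real]
  ring

/-- Gaussian tail asymptotics in `ℝ^d`:
`γ_d({‖x‖ ≥ r}) ∼ (2π)^{−d/2}·(d·ω_d)·e^{−r²/2} r^{d−2}` as `r → ∞`,
where `ω_d` is the Lebesgue volume of the unit ball in `ℝ^d`. -/
theorem stmt5 (d : ℕ) (hd : 1 ≤ d) :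
    Tendsto (fun r : ℝ =>
        (2 * Real.pi) ^ ((d : ℝ) / 2) *
          ((d : ℝ) * (volume (Metric.closedBall (0 : EuclideanSpace ℝ (Fin d)) 1)).toReal)⁻¹ *
          Real.exp (r ^ 2 / 2) * r ^ ((2 : ℝ) - (d : ℝ)) *
          (stdGaussian d {x : EuclideanSpace ℝ (Fin d) | r ≤ ‖x‖}).toReal)
      atTop (nhds 1) := by
  set V := (d : ℝ) * (volume (closedBall (0 : EuclideanSpace ℝ (Fin d)) 1)).toReal
  have hV : V ≠ 0 := mul_ne_zero (by positivity)
    (ENNReal.toReal_pos (measure_closedBall_pos _ _ one_pos).ne' measure_closedBall_lt_top.ne).ne'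
  have hpi : (2 * π) ^ ((d : ℝ) / 2) * (2 * π) ^ (-(d : ℝ) / 2) = 1 := by
    rw [← rpow_add (by positivity), show (d : ℝ) / 2 + -(d : ℝ) / 2 = 0 by ring, rpow_zero]
  refine (tendsto_integral_Ioi_rpow_mul_exp_neg_sq_div_two_div_atTop (s := d - 1)
    (by linarith [(Nat.one_le_cast.2 hd : (1 : ℝ) ≤ d)])).congr' ?_
  filter_upwards [eventually_gt_atTop 0] with r hr
  set T := ∫ t in Ioi r, t ^ ((d : ℝ) - 1) * exp (-t ^ 2 / 2)
  have hpow : r ^ ((2 : ℝ) - d) = (r ^ ((d : ℝ) - 1 - 1))⁻¹ := by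
    rw [← rpow_neg hr.le]; ring_nf
  have hexp : exp (r ^ 2 / 2) = (exp (-r ^ 2 / 2))⁻¹ := by
    rw [← exp_neg]; ring_nf
  rw [stdGaussian_toReal_setOf_le_norm hd hr, hpow, hexp]
  calc T / (exp (-r ^ 2 / 2) * r ^ ((d : ℝ) - 1 - 1))
      = ((2 * π) ^ ((d : ℝ) / 2) * (2 * π) ^ (-(d : ℝ) / 2)) * (V⁻¹ * V) *
          (T / (exp (-r ^ 2 / 2) * r ^ ((d : ℝ) - 1 - 1))) := by
        rw [hpi, inv_mul_cancel₀ hV, one_mul, one_mul]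
    _ = _ := by ring
end

section
/- Let d ≥ 1 be an integer, λ < 0 a real number, and δ ∈ (0, √(−2λ)). Let R(t) = δt + a(t) where a : (0,∞) → [0,∞) satisfies a(t) = o(t) as t → ∞. Let α ∈ (0,1) and let s : (0,∞) → [0,∞) satisfy s(t) ≤ αt for all t and s(t) = o(t) as t → ∞; let b : (0,∞) → [0,∞) satisfy b(t) = o(t); and let x : (0,∞) → ℝ^d satisfy ‖x(t)‖ ≤ b(t) for all sufficiently large t. Let h : ℝ^d → (0,∞) be a continuous strictly positive function such that, for some c₁ > 0, h(y) ≥ c₁ e^{−√(−2λ)‖y‖} ‖y‖^{−(d−1)/2} whenever ‖y‖ ≥ 1. Then there exist constants C > 0 and T ≥ 0 such that for all t ≥ T, γ_d({z ∈ ℝ^d : ‖x(t) + √(t − s(t)) · z‖ ≥ R(t)}) ≤ h(x(t)) · e^{−Ct} · e^{−λ(t−s(t)) − √(−2λ) R(t)}. -/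
/-!
Write `μ = √(−2λ)` and `τ = t − s(t)`. On the event, `‖z‖ ≥ r := (R − ‖x‖)/√τ`, and the Chernoff
bound gives `γ_d(‖z‖ ≥ r) ≤ (1 − 2θ)^{−d/2} e^{−θr²}` for every `θ ∈ [0, 1/2)`. Continuity and the
lower bound at infinity give `h(y) ≥ c e^{−(μ + (d−1)/2)‖y‖}`, while `r² ≥ δ²t − o(t)`,
`−λτ = μ²t/2 − o(t)` and `‖x(t)‖ = o(t)`. Hence the right-hand side exceeds the Chernoff bound by a
factor `exp(t (μ²/2 − μδ + θδ²) − o(t))`. At `θ = 1/2` this rate is `(μ − δ)²/2 > 0`, so some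
`θ < 1/2` leaves a positive rate, and half of it serves as `C`.
-/

open MeasureTheory Filter

open Asymptotics Topology

section Gaussian

variable {V : Type*} [NormedAddCommGroup V] [InnerProductSpace ℝ V] [FiniteDimensional ℝ V]
  [MeasurableSpace V] [BorelSpace V]

lemma integrable_exp_neg_mul_sq_norm {c : ℝ} (hc : 0 < c) :
    Integrable fun v : V => Real.exp (-c * ‖v‖ ^ 2) :=
  Integrable.of_integral_ne_zero <| by
    rw [GaussianFourier.integral_rexp_neg_mul_sq_norm hc]; positivity

lemma lintegral_ofReal_exp_neg_mul_sq_norm {c : ℝ} (hc : 0 < c) :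
    ∫⁻ v : V, ENNReal.ofReal (Real.exp (-c * ‖v‖ ^ 2)) =
      ENNReal.ofReal ((Real.pi / c) ^ (Module.finrank ℝ V / 2 : ℝ)) := by
  rw [← ofReal_integral_eq_lintegral_ofReal (integrable_exp_neg_mul_sq_norm hc)
    (ae_of_all _ fun v => (Real.exp_pos _).le), GaussianFourier.integral_rexp_neg_mul_sq_norm hc]

end Gaussian

lemma stdGaussian_setOf_le_norm_le {d : ℕ} {θ r : ℝ} (hθ0 : 0 ≤ θ) (hθ : θ < 1 / 2)
    (hr : 0 ≤ r) :
    stdGaussian d {z | r ≤ ‖z‖} ≤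
      ENNReal.ofReal ((1 - 2 * θ) ^ (-(d : ℝ) / 2) * Real.exp (-θ * r ^ 2)) := by
  have hc : 0 < 1 / 2 - θ := by linarith
  have hconst : (2 * Real.pi) ^ (-(d : ℝ) / 2) * (Real.pi / (1 / 2 - θ)) ^ ((d : ℝ) / 2) =
      (1 - 2 * θ) ^ (-(d : ℝ) / 2) := by
    rw [neg_div, Real.rpow_neg (by positivity), Real.rpow_neg (by linarith), ← div_eq_inv_mul,
      ← Real.div_rpow (by positivity) (by positivity), ← Real.inv_rpow (by linarith)]
    congr 1
    field_simp
  set κ : ℝ := (2 * Real.pi) ^ (-(d : ℝ) / 2)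
  calc stdGaussian d {z | r ≤ ‖z‖}
      = ∫⁻ z in {z | r ≤ ‖z‖}, ENNReal.ofReal (κ * Real.exp (-‖z‖ ^ 2 / 2)) :=
        withDensity_apply' _ _
    _ ≤ ∫⁻ z in {z | r ≤ ‖z‖}, ENNReal.ofReal (κ * Real.exp (-θ * r ^ 2)) *
          ENNReal.ofReal (Real.exp (-(1 / 2 - θ) * ‖z‖ ^ 2)) := by
        refine setLIntegral_mono (by fun_prop) fun z hz => ?_
        rw [← ENNReal.ofReal_mul (by positivity), mul_assoc, ← Real.exp_add]
        gcongr
        nlinarith [pow_le_pow_left₀ hr hz 2]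
    _ ≤ ∫⁻ z, ENNReal.ofReal (κ * Real.exp (-θ * r ^ 2)) *
          ENNReal.ofReal (Real.exp (-(1 / 2 - θ) * ‖z‖ ^ 2)) := setLIntegral_le_lintegral _ _
    _ = ENNReal.ofReal ((1 - 2 * θ) ^ (-(d : ℝ) / 2) * Real.exp (-θ * r ^ 2)) := by
        rw [lintegral_const_mul' _ _ ENNReal.ofReal_ne_top, lintegral_ofReal_exp_neg_mul_sq_norm hc,
          ← ENNReal.ofReal_mul (by positivity), finrank_euclideanSpace_fin, ← hconst]
        ring_nf

lemma stdGaussian_setOf_le_norm_add_sqrt_smul_le {d : ℕ} {θ τ R : ℝ}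
    (x : EuclideanSpace ℝ (Fin d)) (hθ0 : 0 ≤ θ) (hθ : θ < 1 / 2) (hτ : 0 < τ) (hR : ‖x‖ ≤ R) :
    stdGaussian d {z | R ≤ ‖x + Real.sqrt τ • z‖} ≤
      ENNReal.ofReal ((1 - 2 * θ) ^ (-(d : ℝ) / 2) * Real.exp (-θ * ((R - ‖x‖) ^ 2 / τ))) := by
  have hσ : 0 < Real.sqrt τ := Real.sqrt_pos.2 hτ
  have hr : (R - ‖x‖) ^ 2 / τ = ((R - ‖x‖) / Real.sqrt τ) ^ 2 := by
    rw [div_pow, Real.sq_sqrt hτ.le]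
  rw [hr]
  refine (measure_mono fun z (hz : R ≤ _) => ?_).trans
    (stdGaussian_setOf_le_norm_le hθ0 hθ (div_nonneg (sub_nonneg.2 hR) hσ.le))
  rw [Set.mem_ofPred_eq, div_le_iff₀' hσ]
  have := norm_add_le x (Real.sqrt τ • z)
  rw [norm_smul, Real.norm_of_nonneg hσ.le] at this
  linarith

lemma exp_neg_mul_le_rpow_neg {u κ : ℝ} (hu : 1 ≤ u) (hκ : 0 ≤ κ) :
    Real.exp (-κ * u) ≤ u ^ (-κ) := by
  rw [Real.rpow_def_of_pos (by linarith)]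
  exact Real.exp_le_exp.2 (by nlinarith [Real.log_le_self (by linarith : (0 : ℝ) ≤ u)])

lemma exists_pos_mul_exp_neg_mul_norm_le {E : Type*} [NormedAddCommGroup E] [ProperSpace E]
    {h : E → ℝ} (hcont : Continuous h) (hpos : ∀ y, 0 < h y) {μ κ c₁ : ℝ} (hμ : 0 ≤ μ)
    (hκ : 0 ≤ κ) (hc₁ : 0 < c₁)
    (hlb : ∀ y, 1 ≤ ‖y‖ → c₁ * Real.exp (-μ * ‖y‖) * ‖y‖ ^ (-κ) ≤ h y) :
    ∃ c > 0, ∀ y, c * Real.exp (-(μ + κ) * ‖y‖) ≤ h y := by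
  obtain ⟨y₀, -, hy₀⟩ := (isCompact_closedBall (0 : E) 1).exists_isMinOn
    ⟨0, Metric.mem_closedBall_self zero_le_one⟩ hcont.continuousOn
  refine ⟨min (h y₀) c₁, lt_min (hpos y₀) hc₁, fun y => ?_⟩
  rcases le_total ‖y‖ 1 with hy | hy
  · calc min (h y₀) c₁ * Real.exp (-(μ + κ) * ‖y‖) ≤ h y₀ * 1 :=
          mul_le_mul (min_le_left _ _) (Real.exp_le_one_iff.2 (by nlinarith [norm_nonneg y]))
            (Real.exp_pos _).le (hpos y₀).le
      _ ≤ h y := by rw [mul_one]; exact hy₀ (mem_closedBall_zero_iff.2 hy)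
  · calc min (h y₀) c₁ * Real.exp (-(μ + κ) * ‖y‖)
          = min (h y₀) c₁ * Real.exp (-μ * ‖y‖) * Real.exp (-κ * ‖y‖) := by
            rw [mul_assoc, ← Real.exp_add]; ring_nf
      _ ≤ c₁ * Real.exp (-μ * ‖y‖) * ‖y‖ ^ (-κ) := by
            gcongr
            · exact min_le_right _ _
            · exact exp_neg_mul_le_rpow_neg hy hκ
      _ ≤ h y := hlb y hy

lemma toReal_stdGaussian_setOf_le_norm_add_sqrt_smul_le_mul_exp {d : ℕ} {θ τ R c A E₁ E₂ : ℝ}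
    {h : EuclideanSpace ℝ (Fin d) → ℝ} (x : EuclideanSpace ℝ (Fin d)) (hθ0 : 0 ≤ θ)
    (hθ : θ < 1 / 2) (hτ : 0 < τ) (hR : ‖x‖ ≤ R) (hc : 0 < c)
    (hhx : c * Real.exp (-A * ‖x‖) ≤ h x)
    (hexp : Real.log ((1 - 2 * θ) ^ (-(d : ℝ) / 2) / c) - θ * ((R - ‖x‖) ^ 2 / τ) ≤
      -A * ‖x‖ + E₁ + E₂) :
    (stdGaussian d {z | R ≤ ‖x + Real.sqrt τ • z‖}).toReal ≤
      h x * Real.exp E₁ * Real.exp E₂ := by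
  have hK : 0 < (1 - 2 * θ) ^ (-(d : ℝ) / 2) := Real.rpow_pos_of_pos (by linarith) _
  refine ENNReal.toReal_le_of_le_ofReal (by positivity [hhx.trans' (by positivity)])
    ((stdGaussian_setOf_le_norm_add_sqrt_smul_le x hθ0 hθ hτ hR).trans
      (ENNReal.ofReal_le_ofReal ?_))
  calc (1 - 2 * θ) ^ (-(d : ℝ) / 2) * Real.exp (-θ * ((R - ‖x‖) ^ 2 / τ))
      = c * Real.exp (Real.log ((1 - 2 * θ) ^ (-(d : ℝ) / 2) / c) -
          θ * ((R - ‖x‖) ^ 2 / τ)) := by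
        rw [Real.exp_sub, Real.exp_log (div_pos hK hc), neg_mul, Real.exp_neg]
        field_simp
    _ ≤ c * Real.exp (-A * ‖x‖ + E₁ + E₂) := by gcongr
    _ = c * Real.exp (-A * ‖x‖) * Real.exp E₁ * Real.exp E₂ := by
        rw [Real.exp_add, Real.exp_add]; ring
    _ ≤ h x * Real.exp E₁ * Real.exp E₂ := by gcongr

/-- The exponential rate by which `e^{μ²t/2 − μδt}` beats the Chernoff bound `e^{−θδ²t}`; at
`θ = 1/2` it is `(μ − δ)²/2`. -/
noncomputable def tailRate (μ δ θ : ℝ) : ℝ := μ ^ 2 / 2 - μ * δ + θ * δ ^ 2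

lemma exists_tailRate_pos {μ δ : ℝ} (hδ : δ < μ) :
    ∃ θ ∈ Set.Ico (0 : ℝ) (1 / 2), 0 < tailRate μ δ θ := by
  have hlim : Tendsto (tailRate μ δ) (𝓝[<] (1 / 2)) (𝓝 ((μ - δ) ^ 2 / 2)) := by
    have hcont : Continuous (tailRate μ δ) := by unfold tailRate; fun_prop
    convert hcont.continuousWithinAt.tendsto using 2
    unfold tailRate; ring
  have hpos : 0 < (μ - δ) ^ 2 / 2 := by have := sub_pos.2 hδ; positivity
  exact (Filter.Eventually.and (Ico_mem_nhdsLT (by norm_num : (0 : ℝ) < 1 / 2))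
    (hlim.eventually (lt_mem_nhds hpos))).exists

lemma chernoff_exponent_le_of_tailRate {μ δ θ A C L t s a b ξ : ℝ} (hθ : 0 ≤ θ) (hA : 0 ≤ A)
    (hs : 0 ≤ s) (hst : s < t) (ha : 0 ≤ a) (hξ : ξ ≤ b) (hb : b ≤ δ * t)
    (hsmall : L + (A + 2 * θ * δ) * b + μ ^ 2 / 2 * s + μ * a ≤ (tailRate μ δ θ - C) * t) :
    L - θ * ((δ * t + a - ξ) ^ 2 / (t - s)) ≤
      -A * ξ + -C * t + (μ ^ 2 / 2 * (t - s) - μ * (δ * t + a)) := by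
  have ht : 0 < t := hs.trans_lt hst
  have hr : δ ^ 2 * t - 2 * δ * b ≤ (δ * t + a - ξ) ^ 2 / (t - s) :=
    calc δ ^ 2 * t - 2 * δ * b ≤ (δ * t - b) ^ 2 / t := by
          rw [le_div_iff₀ ht]; nlinarith [sq_nonneg b]
      _ ≤ (δ * t - b) ^ 2 / (t - s) :=
          div_le_div_of_nonneg_left (sq_nonneg _) (by linarith) (by linarith)
      _ ≤ (δ * t + a - ξ) ^ 2 / (t - s) := by gcongr; linarith
  have := mul_le_mul_of_nonneg_left hr hθ
  have := mul_le_mul_of_nonneg_left hξ hA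
  unfold tailRate at hsmall
  linarith

lemma isLittleO_id_of_tendsto_div {f : ℝ → ℝ} (hf : Tendsto (fun t => f t / t) atTop (𝓝 0)) :
    f =o[atTop] id :=
  isLittleO_of_tendsto' (by filter_upwards [eventually_ne_atTop 0] with t ht h using absurd h ht)
    hf

theorem stmt6_general (d : ℕ) (hd : 1 ≤ d) (lam : ℝ) (hlam : lam < 0)
    (δ : ℝ) (hδ : δ ∈ Set.Ioo 0 (Real.sqrt (-2 * lam)))
    (a : ℝ → ℝ) (ha0 : ∀ t > 0, 0 ≤ a t)
    (haoto : Tendsto (fun t => a t / t) atTop (nhds 0))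
    (R : ℝ → ℝ) (hR : ∀ t, R t = δ * t + a t)
    (α : ℝ) (hα : α ∈ Set.Ioo (0 : ℝ) 1)
    (s : ℝ → ℝ) (hs0 : ∀ t > 0, 0 ≤ s t) (hsα : ∀ t > 0, s t ≤ α * t)
    (hsoto : Tendsto (fun t => s t / t) atTop (nhds 0))
    (b : ℝ → ℝ)
    (hboto : Tendsto (fun t => b t / t) atTop (nhds 0))
    (x : ℝ → EuclideanSpace ℝ (Fin d)) (hx : ∀ᶠ t in atTop, ‖x t‖ ≤ b t)
    (h : EuclideanSpace ℝ (Fin d) → ℝ) (hcont : Continuous h) (hpos : ∀ y, 0 < h y)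
    (c₁ : ℝ) (hc₁ : 0 < c₁)
    (hlb : ∀ y : EuclideanSpace ℝ (Fin d), 1 ≤ ‖y‖ →
      c₁ * Real.exp (-Real.sqrt (-2 * lam) * ‖y‖) * ‖y‖ ^ (-((d : ℝ) - 1) / 2) ≤ h y) :
    ∃ C > 0, ∃ T ≥ (0 : ℝ), ∀ t ≥ T,
      (stdGaussian d
          {z : EuclideanSpace ℝ (Fin d) | R t ≤ ‖x t + Real.sqrt (t - s t) • z‖}).toReal ≤
        h (x t) * Real.exp (-C * t) *
          Real.exp (-lam * (t - s t) - Real.sqrt (-2 * lam) * R t) := by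
  set μ := Real.sqrt (-2 * lam) with hμ
  have hlam' : -lam = μ ^ 2 / 2 := by rw [hμ, Real.sq_sqrt (by linarith)]; ring
  have hκ : 0 ≤ ((d : ℝ) - 1) / 2 := by
    have : (1 : ℝ) ≤ d := by exact_mod_cast hd
    linarith
  obtain ⟨c, hc, hhc⟩ := exists_pos_mul_exp_neg_mul_norm_le hcont hpos (Real.sqrt_nonneg _) hκ
    hc₁ (by simpa only [neg_div] using hlb)
  obtain ⟨θ, ⟨hθ0, hθ⟩, hq⟩ := exists_tailRate_pos hδ.2
  set q := tailRate μ δ θ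
  set L := Real.log ((1 - 2 * θ) ^ (-(d : ℝ) / 2) / c)
  set A := μ + ((d : ℝ) - 1) / 2
  have hbo := isLittleO_id_of_tendsto_div hboto
  have ho : (fun t => L + (A + 2 * θ * δ) * b t + μ ^ 2 / 2 * s t + μ * a t) =o[atTop] id :=
    (((isLittleO_const_id_atTop L).add (hbo.const_mul_left _)).add
      ((isLittleO_id_of_tendsto_div hsoto).const_mul_left _)).add
      ((isLittleO_id_of_tendsto_div haoto).const_mul_left _)
  refine ⟨q / 2, half_pos hq, ?_⟩
  obtain ⟨T, hT⟩ := eventually_atTop.1 <| (ho.bound (half_pos hq)).and <|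
    (hbo.bound hδ.1).and <| hx.and (eventually_gt_atTop 0)
  refine ⟨max T 0, le_max_right _ _, fun t ht => ?_⟩
  obtain ⟨hsmall, hbδ, hxb, ht0⟩ := hT t (le_of_max_le_left ht)
  simp only [Real.norm_eq_abs, id, abs_of_pos ht0] at hsmall hbδ
  have hb : b t ≤ δ * t := (le_abs_self _).trans hbδ
  have hst : s t < t := (hsα t ht0).trans_lt (by nlinarith [hα.2])
  rw [hR, hlam']
  refine toReal_stdGaussian_setOf_le_norm_add_sqrt_smul_le_mul_exp (x t) hθ0 hθ (by linarith)
    (by linarith [ha0 t ht0]) hc (hhc (x t)) ?_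
  exact chernoff_exponent_le_of_tailRate hθ0 (by positivity) (hs0 t ht0) hst (ha0 t ht0) hxb hb
    (by linarith [(le_abs_self _).trans hsmall])

/-- Gaussian form of the Brownian tail estimate
`P_{x(t)}(|B_{t−s(t)}| ≥ R(t)) ≤ h(x(t)) e^{−Ct} e^{−λ(t−s(t)) − √(−2λ)R(t)}`. -/
theorem stmt6 (d : ℕ) (hd : 1 ≤ d) (lam : ℝ) (hlam : lam < 0)
    (δ : ℝ) (hδ : δ ∈ Set.Ioo 0 (Real.sqrt (-2 * lam)))
    (a : ℝ → ℝ) (ha0 : ∀ t > 0, 0 ≤ a t)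
    (haoto : Tendsto (fun t => a t / t) atTop (nhds 0))
    (R : ℝ → ℝ) (hR : ∀ t, R t = δ * t + a t)
    (α : ℝ) (hα : α ∈ Set.Ioo (0 : ℝ) 1)
    (s : ℝ → ℝ) (hs0 : ∀ t > 0, 0 ≤ s t) (hsα : ∀ t > 0, s t ≤ α * t)
    (hsoto : Tendsto (fun t => s t / t) atTop (nhds 0))
    (b : ℝ → ℝ) (hb0 : ∀ t > 0, 0 ≤ b t)
    (hboto : Tendsto (fun t => b t / t) atTop (nhds 0))
    (x : ℝ → EuclideanSpace ℝ (Fin d)) (hx : ∀ᶠ t in atTop, ‖x t‖ ≤ b t)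
    (h : EuclideanSpace ℝ (Fin d) → ℝ) (hcont : Continuous h) (hpos : ∀ y, 0 < h y)
    (c₁ : ℝ) (hc₁ : 0 < c₁)
    (hlb : ∀ y : EuclideanSpace ℝ (Fin d), 1 ≤ ‖y‖ →
      c₁ * Real.exp (-Real.sqrt (-2 * lam) * ‖y‖) * ‖y‖ ^ (-((d : ℝ) - 1) / 2) ≤ h y) :
    ∃ C > 0, ∃ T ≥ (0 : ℝ), ∀ t ≥ T,
      (stdGaussian d
          {z : EuclideanSpace ℝ (Fin d) | R t ≤ ‖x t + Real.sqrt (t - s t) • z‖}).toReal ≤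
        h (x t) * Real.exp (-C * t) *
          Real.exp (-lam * (t - s t) - Real.sqrt (-2 * lam) * R t) :=
  stmt6_general d hd lam hlam δ hδ a ha0 haoto R hR α hα s hs0 hsα hsoto b hboto x hx h hcont hpos
    c₁ hc₁ hlb
end

section
/- Let d ≥ 1 be an integer, λ < 0, δ ∈ (0, √(−2λ)), and r₁ ∈ ℝ. Let R(t) = δt + a(t) where a : (0,∞) → [0,∞) satisfies a(t) = o(t) as t → ∞, and let s : (0,∞) → [0,∞) satisfy s(t) = o(t) and s(t) < t for all t. Define L(t) = (√(−2λ)·(t − s(t)) − (R(t) + r₁)) / √(2(t − s(t))). Then there exist constants C > 0 and T > 0 such that for all t ≥ T, (R(t) + r₁)^{(d−1)/2} · ∫_{L(t)}^∞ e^{−v²} dv ≤ e^{−Ct}. -/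
open MeasureTheory Filter Topology Asymptotics Real

/-! With `b = √(-2λ)`, the numerator of `L t` is `(b - δ) t + o(t)` and its denominator is
`√(2t) (1 + o(1))`, so `L t ^ 2 / t → (b - δ)² / 2 > 0`. Since `R t + r₁ ~ δ t`, the logarithm of
the prefactor is `o(t)`, while the Gaussian tail is at most `exp (-(L t) ^ 2)` once `L t ≥ 1/2`.
Hence the logarithm of the product is eventually below `-(b - δ)² t / 4`. -/

lemma integral_Ici_exp_neg_sq_le {l : ℝ} (hl : 1 / 2 ≤ l) :
    ∫ v in Set.Ici l, exp (-v ^ 2) ≤ exp (-l ^ 2) := by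
  have hgauss : IntegrableOn (fun v : ℝ => exp (-v ^ 2)) (Set.Ici l) := by
    simpa using (integrable_exp_neg_mul_sq one_pos).integrableOn
  have hexp : IntegrableOn (fun v : ℝ => exp (-l ^ 2 + l) * exp (-v)) (Set.Ici l) := by
    rw [integrableOn_Ici_iff_integrableOn_Ioi]
    exact (integrableOn_exp_neg_Ioi l).const_mul _
  calc ∫ v in Set.Ici l, exp (-v ^ 2)
      ≤ ∫ v in Set.Ici l, exp (-l ^ 2 + l) * exp (-v) := by
        refine setIntegral_mono_on hgauss hexp measurableSet_Ici fun v (hv : l ≤ v) => ?_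
        rw [← exp_add, exp_le_exp]
        -- `v ^ 2 - l ^ 2 - (v - l) = (v - l) (v + l - 1) ≥ 0`
        nlinarith [mul_nonneg (sub_nonneg.2 hv) (by linarith : (0 : ℝ) ≤ v + l - 1)]
    _ = exp (-l ^ 2) := by
        rw [integral_const_mul, integral_Ici_eq_integral_Ioi, integral_exp_neg_Ioi, ← exp_add]
        ring_nf

lemma rpow_mul_integral_Ici_exp_neg_sq_le {x l : ℝ} (p : ℝ) (hx : 0 < x) (hl : 1 / 2 ≤ l) :
    x ^ p * ∫ v in Set.Ici l, exp (-v ^ 2) ≤ exp (p * log x - l ^ 2) := by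
  calc x ^ p * ∫ v in Set.Ici l, exp (-v ^ 2) ≤ x ^ p * exp (-l ^ 2) :=
        mul_le_mul_of_nonneg_left (integral_Ici_exp_neg_sq_le hl) (rpow_nonneg hx.le p)
    _ = exp (p * log x - l ^ 2) := by
        rw [rpow_def_of_pos hx, ← exp_add, mul_comm, sub_eq_add_neg]

lemma tendsto_atTop_of_div_tendsto_pos {α : Type*} {l : Filter α} {f g : α → ℝ} {c : ℝ}
    (hc : 0 < c) (hg : Tendsto g l atTop) (hfg : Tendsto (fun x => f x / g x) l (𝓝 c)) :
    Tendsto f l atTop := by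
  refine (hfg.pos_mul_atTop hc hg).congr' ?_
  filter_upwards [hg.eventually_gt_atTop 0] with x hx
  exact div_mul_cancel₀ _ hx.ne'

lemma tendsto_log_div_self_of_div_tendsto_pos {f : ℝ → ℝ} {c : ℝ} (hc : 0 < c)
    (hf : Tendsto (fun t => f t / t) atTop (𝓝 c)) :
    Tendsto (fun t => log (f t) / t) atTop (𝓝 0) := by
  have hf_top := tendsto_atTop_of_div_tendsto_pos hc tendsto_id hf
  have hf_id : f =O[atTop] id :=
    isBigO_of_div_tendsto_nhds ((eventually_ne_atTop 0).mono fun _ ht h => absurd h ht) c hf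
  exact ((isLittleO_log_id_atTop.comp_tendsto hf_top).trans_isBigO hf_id).tendsto_div_nhds_zero

lemma tendsto_div_sqrt_two_mul_sub_div_sqrt {N s : ℝ → ℝ} {c : ℝ}
    (hN : Tendsto (fun t => N t / t) atTop (𝓝 c))
    (hs : Tendsto (fun t => s t / t) atTop (𝓝 0)) :
    Tendsto (fun t => N t / √(2 * (t - s t)) / √t) atTop (𝓝 (c / √2)) := by
  have hden : Tendsto (fun t => √(2 * (1 - s t / t))) atTop (𝓝 √2) := by
    simpa using ((hs.const_sub 1).const_mul 2).sqrt
  refine (hN.div hden (by positivity)).congr' ?_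
  filter_upwards [eventually_gt_atTop 0] with t ht
  have hst : 2 * (1 - s t / t) = 2 * (t - s t) / t := by field_simp
  rw [Pi.div_apply, hst, sqrt_div' _ ht.le]
  field_simp
  rw [sq_sqrt ht.le]

theorem stmt10_general (d : ℕ) (lam : ℝ)
    (δ : ℝ) (hδ : δ ∈ Set.Ioo 0 (Real.sqrt (-2 * lam))) (r₁ : ℝ)
    (a : ℝ → ℝ)
    (haoto : Tendsto (fun t => a t / t) atTop (nhds 0))
    (R : ℝ → ℝ) (hR : ∀ t, R t = δ * t + a t)
    (s : ℝ → ℝ)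
    (hsoto : Tendsto (fun t => s t / t) atTop (nhds 0))
    (L : ℝ → ℝ)
    (hL : ∀ t, L t = (Real.sqrt (-2 * lam) * (t - s t) - (R t + r₁)) /
      Real.sqrt (2 * (t - s t))) :
    ∃ C > 0, ∃ T > (0 : ℝ), ∀ t ≥ T,
      (R t + r₁) ^ (((d : ℝ) - 1) / 2) * ∫ v in Set.Ici (L t), Real.exp (-v ^ 2) ≤
        Real.exp (-C * t) := by
  set b := √(-2 * lam)
  set p := ((d : ℝ) - 1) / 2
  have hgap : 0 < (b - δ) / √2 := div_pos (sub_pos.2 hδ.2) (by positivity)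
  set κ := ((b - δ) / √2) ^ 2
  have hκ : 0 < κ := pow_pos hgap 2
  have hRt : Tendsto (fun t => (R t + r₁) / t) atTop (𝓝 δ) := by
    have h : Tendsto (fun t => δ + (a t / t + r₁ / t)) atTop (𝓝 (δ + (0 + 0))) :=
      (haoto.add (tendsto_const_nhds.div_atTop tendsto_id)).const_add δ
    rw [add_zero, add_zero] at h
    refine h.congr' ?_
    filter_upwards [eventually_ne_atTop 0] with t ht
    rw [hR]; field_simp; ring
  have hLt : Tendsto (fun t => L t / √t) atTop (𝓝 ((b - δ) / √2)) := by
    simp_rw [hL]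
    refine tendsto_div_sqrt_two_mul_sub_div_sqrt ?_ hsoto
    have h : Tendsto (fun t => b * (1 - s t / t) - (R t + r₁) / t) atTop (𝓝 (b * (1 - 0) - δ)) :=
      ((hsoto.const_sub 1).const_mul b).sub hRt
    rw [sub_zero, mul_one] at h
    refine h.congr' ?_
    filter_upwards [eventually_ne_atTop 0] with t ht
    field_simp
  have hexponent : Tendsto (fun t => (p * log (R t + r₁) - L t ^ 2) / t) atTop (𝓝 (-κ)) := by
    have h : Tendsto (fun t => p * (log (R t + r₁) / t) - (L t / √t) ^ 2) atTop (𝓝 (p * 0 - κ)) :=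
      ((tendsto_log_div_self_of_div_tendsto_pos hδ.1 hRt).const_mul p).sub (hLt.pow 2)
    rw [mul_zero, zero_sub] at h
    refine h.congr' ?_
    filter_upwards [eventually_gt_atTop 0] with t ht
    rw [div_pow, sq_sqrt ht.le]; ring
  have hLtop := tendsto_atTop_of_div_tendsto_pos hgap tendsto_sqrt_atTop hLt
  obtain ⟨T, hT⟩ := eventually_atTop.1 <|
    ((tendsto_atTop_of_div_tendsto_pos hδ.1 tendsto_id hRt).eventually_gt_atTop 0).and <|
    (hLtop.eventually_ge_atTop (1 / 2)).and <|
    (hexponent.eventually (gt_mem_nhds (by linarith : -κ < -κ / 2))).and (eventually_gt_atTop 0)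
  refine ⟨κ / 2, by positivity, max T 1, by positivity, fun t ht => ?_⟩
  obtain ⟨hRpos, hLhalf, hdecay, htpos⟩ := hT t (le_of_max_le_left ht)
  calc (R t + r₁) ^ p * ∫ v in Set.Ici (L t), exp (-v ^ 2)
      ≤ exp (p * log (R t + r₁) - L t ^ 2) := rpow_mul_integral_Ici_exp_neg_sq_le p hRpos hLhalf
    _ ≤ exp (-(κ / 2) * t) := exp_le_exp.2 (by linarith [(div_lt_iff₀ htpos).1 hdecay])

/-- Bound on the Gaussian-tail factor in `J(t−s(t), R(t)+r₁)`:
`(R(t)+r₁)^{(d−1)/2} ∫_{L(t)}^∞ e^{−v²} dv ≤ e^{−Ct}` for all large `t`, where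
`L(t) = (√(−2λ)(t−s(t)) − (R(t)+r₁)) / √(2(t−s(t)))`. -/
theorem stmt10 (d : ℕ) (hd : 1 ≤ d) (lam : ℝ) (hlam : lam < 0)
    (δ : ℝ) (hδ : δ ∈ Set.Ioo 0 (Real.sqrt (-2 * lam))) (r₁ : ℝ)
    (a : ℝ → ℝ) (ha0 : ∀ t > 0, 0 ≤ a t)
    (haoto : Tendsto (fun t => a t / t) atTop (nhds 0))
    (R : ℝ → ℝ) (hR : ∀ t, R t = δ * t + a t)
    (s : ℝ → ℝ) (hs0 : ∀ t > 0, 0 ≤ s t) (hst : ∀ t > 0, s t < t)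
    (hsoto : Tendsto (fun t => s t / t) atTop (nhds 0))
    (L : ℝ → ℝ)
    (hL : ∀ t, L t = (Real.sqrt (-2 * lam) * (t - s t) - (R t + r₁)) /
      Real.sqrt (2 * (t - s t))) :
    ∃ C > 0, ∃ T > (0 : ℝ), ∀ t ≥ T,
      (R t + r₁) ^ (((d : ℝ) - 1) / 2) * ∫ v in Set.Ici (L t), Real.exp (-v ^ 2) ≤
        Real.exp (-C * t) :=
  stmt10_general d lam δ hδ r₁ a haoto R hR s hsoto L hL
end
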